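/- For every integer d ≥ 2 there exist 2d+1 pairwise non-proportional nonzero vectors P₁,…,P_{2d+1} ∈ ℂ³ and a nonzero vector B ∈ ℂ³ such that the only homogeneous polynomial F ∈ ℂ[x₀,x₁,x₂] of degree d satisfying F(Pᵢ) = 0 for all i and vanishing to order at least d−1 at B is the zero polynomial. -/

import Mathlib

/-!
Take `B = (0, 0, 1)`. At `B` the derivative `∂₀^a ∂₁^b` of a form `F` of degree `d` is
`a! b!` times the coefficient of `x₀^a x₁^b x₂^(d-a-b)`, so vanishing to order `d - 1` at `B`
kills every monomial divisible by `x₂²`. Hence `F(1, t, z) = g(t) + z h(t)` with `deg g ≤ d` and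
`deg h ≤ d - 1`. The `d + 1` points `(1, t, 0)`, `t = 0, …, d`, force `g = 0`; then the `d` points
`(1, t, 1)`, `t = d + 1, …, 2d`, force `h = 0`. So `F` vanishes wherever `x₀ ≠ 0`, hence `F = 0`.
-/

open MvPolynomial

/-- Iterated partial derivative of `F` with respect to the multi-index `α`:
`∂₀^{α 0} ∂₁^{α 1} ∂₂^{α 2} F`. -/
noncomputable def pd (α : Fin 3 → ℕ) (F : MvPolynomial (Fin 3) ℂ) : MvPolynomial (Fin 3) ℂ :=
  (fun G : MvPolynomial (Fin 3) ℂ => pderiv (0 : Fin 3) G)^[α 0]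
    ((fun G : MvPolynomial (Fin 3) ℂ => pderiv (1 : Fin 3) G)^[α 1]
      ((fun G : MvPolynomial (Fin 3) ℂ => pderiv (2 : Fin 3) G)^[α 2] F))

/-- `F` vanishes to order at least `m` at `B`: every iterated partial derivative of `F`
of total order at most `m - 1` vanishes at `B`. -/
def ordGe (m : ℕ) (B : Fin 3 → ℂ) (F : MvPolynomial (Fin 3) ℂ) : Prop :=
  ∀ α : Fin 3 → ℕ, α 0 + α 1 + α 2 < m → MvPolynomial.eval B (pd α F) = 0

theorem Nat.descFactorial_mul_zero_pow {R : Type*} [Semiring R] (n k : ℕ) :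
    (n.descFactorial k : R) * 0 ^ (n - k) = if n = k then (k.factorial : R) else 0 := by
  rcases lt_trichotomy n k with h | rfl | h
  · simp [Nat.descFactorial_eq_zero_iff_lt.mpr h, h.ne]
  · simp [Nat.descFactorial_self]
  · simp [h.ne', zero_pow (Nat.sub_ne_zero_of_lt h)]

namespace MvPolynomial

theorem iterate_pderiv_monomial {σ R : Type*} [CommSemiring R] (i : σ) (n : ℕ) (s : σ →₀ ℕ)
    (c : R) :
    (pderiv i)^[n] (monomial s c) =
      monomial (s - Finsupp.single i n) ((s i).descFactorial n * c) := by
  induction n with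
  | zero => simp
  | succ n ih =>
    rw [Function.iterate_succ_apply', ih, pderiv_monomial, tsub_tsub, ← Finsupp.single_add,
      Nat.descFactorial_succ]
    congr 1
    simp only [Finsupp.tsub_apply, Finsupp.single_eq_same, Nat.cast_mul]
    ring

theorem IsHomogeneous.sum_exponent_eq {σ R : Type*} [Fintype σ] [CommSemiring R]
    {F : MvPolynomial σ R} {n : ℕ} (hF : F.IsHomogeneous n) {s : σ →₀ ℕ} (hs : s ∈ F.support) :
    ∑ i, s i = n := by
  rw [← hF (mem_support_iff.mp hs), Finsupp.weight_apply, Finsupp.sum_fintype _ _ (by simp)]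
  simp only [Pi.one_apply, smul_eq_mul, mul_one]

theorem IsHomogeneous.exponent_sum_eq {R : Type*} [CommSemiring R]
    {F : MvPolynomial (Fin 3) R} {n : ℕ} (hF : F.IsHomogeneous n) {s : Fin 3 →₀ ℕ}
    (hs : s ∈ F.support) : s 0 + s 1 + s 2 = n := by
  rw [← hF.sum_exponent_eq hs, Fin.sum_univ_three]

theorem IsHomogeneous.eval_smul {σ R : Type*} [Fintype σ] [CommSemiring R]
    {F : MvPolynomial σ R} {n : ℕ} (hF : F.IsHomogeneous n) (r : R) (x : σ → R) :
    eval (r • x) F = r ^ n * eval x F := by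
  rw [eval_eq', eval_eq', Finset.mul_sum]
  refine Finset.sum_congr rfl fun s hs => ?_
  simp only [Pi.smul_apply, smul_eq_mul, mul_pow, Finset.prod_mul_distrib,
    Finset.prod_pow_eq_pow_sum, hF.sum_exponent_eq hs]
  ring

end MvPolynomial

theorem pd_sum (α : Fin 3 → ℕ) {ι : Type*} (s : Finset ι) (f : ι → MvPolynomial (Fin 3) ℂ) :
    pd α (∑ x ∈ s, f x) = ∑ x ∈ s, pd α (f x) := by
  let D : Fin 3 → Module.End ℂ (MvPolynomial (Fin 3) ℂ) := fun i => (pderiv i).toLinearMap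
  have hpd : ∀ F, pd α F = (D 0 ^ α 0 * D 1 ^ α 1 * D 2 ^ α 2) F := fun F => by
    simp only [Module.End.mul_apply, Module.End.pow_apply]; rfl
  simp only [hpd, map_sum]

theorem eval_pd_monomial (a b : ℕ) (s : Fin 3 →₀ ℕ) (c : ℂ) :
    eval ![0, 0, 1] (pd ![a, b, 0] (monomial s c)) =
      if s 0 = a ∧ s 1 = b then a.factorial * b.factorial * c else 0 := by
  simp only [pd, Matrix.cons_val_zero, Matrix.cons_val_one, Matrix.cons_val_two, Matrix.tail_cons,
    Matrix.head_cons, iterate_pderiv_monomial, eval_monomial,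
    Finsupp.prod_fintype _ _ (fun _ => pow_zero _), Fin.prod_univ_three, Finsupp.single_zero,
    tsub_zero, Finsupp.coe_tsub, Pi.sub_apply, Finsupp.single_eq_same, Finsupp.single_eq_of_ne,
    ne_eq, zero_ne_one, one_ne_zero, Fin.reduceEq, not_false_eq_true, Nat.descFactorial_zero,
    Nat.cast_one, one_mul, one_pow, mul_one]
  rw [show ∀ x y z w : ℂ, x * (y * c) * (z * w) = x * z * (y * w) * c by intros; ring,
    Nat.descFactorial_mul_zero_pow, Nat.descFactorial_mul_zero_pow]
  split_ifs <;> simp_all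

theorem coeff_eq_zero_of_ordGe {F : MvPolynomial (Fin 3) ℂ} {d m : ℕ} (hF : F.IsHomogeneous d)
    (hord : ordGe m ![0, 0, 1] F) {s : Fin 3 →₀ ℕ} (hs : s 0 + s 1 < m) : coeff s F = 0 := by
  by_contra hsF
  have hsupp : s ∈ F.support := mem_support_iff.mpr hsF
  have key := hord ![s 0, s 1, 0] (by simpa using hs)
  rw [F.as_sum, pd_sum, map_sum, Finset.sum_eq_single_of_mem s hsupp, eval_pd_monomial,
    if_pos ⟨rfl, rfl⟩] at key
  · exact hsF (by simpa [Nat.factorial_ne_zero] using key)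
  · intro s' hs' hne
    rw [eval_pd_monomial, if_neg]
    rintro ⟨h0, h1⟩
    have := hF.exponent_sum_eq hs'
    have := hF.exponent_sum_eq hsupp
    exact hne (Finsupp.ext fun i => by fin_cases i <;> simp <;> omega)

theorem exponent_two_le_one_of_ordGe {F : MvPolynomial (Fin 3) ℂ} {d : ℕ}
    (hF : F.IsHomogeneous d) (hord : ordGe (d - 1) ![0, 0, 1] F) {s : Fin 3 →₀ ℕ}
    (hs : s ∈ F.support) : s 2 ≤ 1 := by
  have := hF.exponent_sum_eq hs
  by_contra h
  exact mem_support_iff.mp hs (coeff_eq_zero_of_ordGe hF hord (by omega))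

open scoped Polynomial

section Dehomogenization

variable {K : Type*} [Field K]

theorem eq_zero_of_forall_eval_one_eq_zero [Infinite K] {F : MvPolynomial (Fin 3) K} {n : ℕ}
    (hF : F.IsHomogeneous n) (h : ∀ t z : K, eval ![1, t, z] F = 0) : F = 0 := by
  refine funext_set (fun i => if i = 0 then {0}ᶜ else Set.univ) (fun i => ?_) fun x hx => ?_
  · split_ifs
    exacts [(Set.finite_singleton 0).infinite_compl, Set.infinite_univ]
  have hx0 : x 0 ≠ 0 := by simpa using hx 0 (Set.mem_univ _)
  have hx : x = x 0 • ![1, x 1 / x 0, x 2 / x 0] := by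
    ext i
    fin_cases i <;> simp [mul_div_cancel₀ _ hx0]
  rw [hx, hF.eval_smul, h, mul_zero, map_zero]

noncomputable def coeffX2 (F : MvPolynomial (Fin 3) K) (k : ℕ) : K[X] :=
  ∑ s ∈ F.support with s 2 = k, Polynomial.monomial (s 1) (coeff s F)

theorem eval_one_eq_coeffX2 {F : MvPolynomial (Fin 3) K} (hF : ∀ s ∈ F.support, s 2 ≤ 1)
    (t z : K) : eval ![1, t, z] F = (coeffX2 F 0).eval t + z * (coeffX2 F 1).eval t := by
  simp only [coeffX2, Polynomial.eval_finsetSum, Finset.sum_filter,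
    Finset.mul_sum, ← Finset.sum_add_distrib]
  rw [eval_eq']
  refine Finset.sum_congr rfl fun s hs => ?_
  obtain h | h : s 2 = 0 ∨ s 2 = 1 := by have := hF s hs; omega
  · simp [h, Fin.prod_univ_three]
  · simp only [Fin.prod_univ_three, Matrix.cons_val_zero, Matrix.cons_val_one, Matrix.cons_val,
      one_pow, one_mul, h, pow_one, one_ne_zero, ↓reduceIte, Polynomial.eval_zero,
      Polynomial.eval_monomial, zero_add]
    ring

theorem coeffX2_mem_degreeLT {F : MvPolynomial (Fin 3) K} {d : ℕ} (hF : F.IsHomogeneous d)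
    (k : ℕ) : coeffX2 F k ∈ Polynomial.degreeLT K (d + 1 - k) :=
  Submodule.sum_mem _ fun s hs => by
    rw [Finset.mem_filter] at hs
    have := hF.exponent_sum_eq hs.1
    rw [Polynomial.mem_degreeLT]
    exact (Polynomial.degree_monomial_le _ _).trans_lt
      (by exact_mod_cast (by omega : s 1 < d + 1 - k))

theorem coeffX2_eq_zero {F : MvPolynomial (Fin 3) K} {d : ℕ} (hF : F.IsHomogeneous d) (k : ℕ)
    (S : Finset K) (hS : d + 1 - k ≤ S.card) (h : ∀ t ∈ S, (coeffX2 F k).eval t = 0) :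
    coeffX2 F k = 0 :=
  Polynomial.eq_zero_of_degree_lt_of_eval_finset_eq_zero S
    ((Polynomial.mem_degreeLT.mp (coeffX2_mem_degreeLT hF k)).trans_le (by exact_mod_cast hS)) h

theorem eq_zero_of_eval_on_two_lines [Infinite K] {F : MvPolynomial (Fin 3) K} {d : ℕ}
    (hF : F.IsHomogeneous d) (hF2 : ∀ s ∈ F.support, s 2 ≤ 1) (S₀ S₁ : Finset K)
    (hS₀ : d < S₀.card) (hS₁ : d ≤ S₁.card)
    (h₀ : ∀ t ∈ S₀, eval ![1, t, 0] F = 0) (h₁ : ∀ t ∈ S₁, eval ![1, t, 1] F = 0) : F = 0 := by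
  have hc₀ : coeffX2 F 0 = 0 := coeffX2_eq_zero hF 0 S₀ (by omega) fun t ht => by
    simpa [eval_one_eq_coeffX2 hF2] using h₀ t ht
  have hc₁ : coeffX2 F 1 = 0 := coeffX2_eq_zero hF 1 S₁ (by omega) fun t ht => by
    simpa [eval_one_eq_coeffX2 hF2, hc₀] using h₁ t ht
  exact eq_zero_of_forall_eval_one_eq_zero hF fun t z => by
    simp [eval_one_eq_coeffX2 hF2, hc₀, hc₁]

end Dehomogenization

theorem ne_smul_of_apply_eq_one {ι R : Type*} [Semiring R] {v w : ι → R} (i : ι) (hv : v i = 1)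
    (hw : w i = 1) (hvw : v ≠ w) (c : R) : v ≠ c • w := by
  rintro rfl
  have hc : c = 1 := by simpa [hw] using hv
  simp [hc] at hvw

theorem exists_general_points_trivial_system_general (d : ℕ) :
    ∃ P : Fin (2 * d + 1) → (Fin 3 → ℂ),
      (∀ i, P i ≠ 0) ∧
      (∀ i j, i ≠ j → ∀ c : ℂ, P i ≠ c • P j) ∧
      ∃ B : Fin 3 → ℂ, B ≠ 0 ∧
        ∀ F : MvPolynomial (Fin 3) ℂ, F.IsHomogeneous d →
          (∀ i, MvPolynomial.eval (P i) F = 0) → ordGe (d - 1) B F → F = 0 := by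
  let P : Fin (2 * d + 1) → Fin 3 → ℂ := fun i => ![1, (i : ℕ), if (i : ℕ) ≤ d then 0 else 1]
  have hP : P.Injective := fun i j h => Fin.ext (by simpa [P] using congrFun h 1)
  refine ⟨P, fun i h => by simpa [P] using congrFun h 0,
    fun i j hij => ne_smul_of_apply_eq_one 0 rfl rfl (hP.ne hij), ![0, 0, 1], by simp, ?_⟩
  intro F hF hPF hord
  refine eq_zero_of_eval_on_two_lines hF (fun s => exponent_two_le_one_of_ordGe hF hord)
    ((Finset.range (d + 1)).image Nat.cast) ((Finset.Ioc d (2 * d)).image Nat.cast) ?_ ?_ ?_ ?_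
  · simp [Finset.card_image_of_injective _ Nat.cast_injective]
  · rw [Finset.card_image_of_injective _ Nat.cast_injective, Nat.card_Ioc]
    omega
  · simp only [Finset.forall_mem_image, Finset.mem_range]
    intro t ht
    simpa only [P, if_pos (Nat.lt_succ_iff.mp ht)] using hPF ⟨t, by omega⟩
  · simp only [Finset.forall_mem_image, Finset.mem_Ioc]
    intro t ht
    simpa only [P, if_neg (not_le.mpr ht.1)] using hPF ⟨t, by omega⟩

/-- For every `d ≥ 2` there exist `2d + 1` pairwise non-proportional nonzero vectors in `ℂ³`
and a nonzero vector `B` such that the only homogeneous polynomial of degree `d` vanishing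
at all the points and to order at least `d - 1` at `B` is the zero polynomial. -/
theorem exists_general_points_trivial_system (d : ℕ) (hd : 2 ≤ d) :
    ∃ P : Fin (2 * d + 1) → (Fin 3 → ℂ),
      (∀ i, P i ≠ 0) ∧
      (∀ i j, i ≠ j → ∀ c : ℂ, P i ≠ c • P j) ∧
      ∃ B : Fin 3 → ℂ, B ≠ 0 ∧
        ∀ F : MvPolynomial (Fin 3) ℂ, F.IsHomogeneous d →
          (∀ i, MvPolynomial.eval (P i) F = 0) → ordGe (d - 1) B F → F = 0 :=
  exists_general_points_trivial_system_general d
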